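/- Let (E, λ) be an M-labeled event structure over a trace alphabet M = (Σ, I). For a vertex v of G(E), the geodesic trace ⟨σ_v⟩ is prime if and only if the interval I(v0,v) is prime, i.e., v has exactly one neighbor in the subgraph of G(E) induced by I(v0,v). -/

import Mathlib

/-- An event structure: a set of events with a causal partial order and a
conflict relation that is irreflexive, symmetric and hereditary, such that
every event has finitely many causes. -/
structure EventStructure (E : Type*) where
  le : E → E → Prop
  conflict : E → E → Prop
  le_refl : ∀ e, le e e
  le_trans : ∀ e₁ e₂ e₃, le e₁ e₂ → le e₂ e₃ → le e₁ e₃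
  le_antisymm : ∀ e₁ e₂, le e₁ e₂ → le e₂ e₁ → e₁ = e₂
  conflict_irrefl : ∀ e, ¬ conflict e e
  conflict_symm : ∀ e₁ e₂, conflict e₁ e₂ → conflict e₂ e₁
  conflict_le : ∀ e₁ e₂ e₃, conflict e₁ e₂ → le e₂ e₃ → conflict e₁ e₃
  finite_cause : ∀ e, Set.Finite {e' | le e' e}

namespace EventStructure

variable {E : Type*} (ES : EventStructure E)

/-- A configuration: a finite, downward-closed, conflict-free set of events. -/
abbrev IsConfig (c : Finset E) : Prop :=
  (∀ e ∈ c, ∀ e', ES.le e' e → e' ∈ c) ∧ ∀ e ∈ c, ∀ e' ∈ c, ¬ ES.conflict e e'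

/-- The type of configurations of an event structure. -/
abbrev Config : Type _ := {c : Finset E // ES.IsConfig c}

/-- `c'` is obtained from the configuration `c` by adding the single event `e`. -/
abbrev Extends (c c' : ES.Config) (e : E) : Prop :=
  e ∉ c.1 ∧ ∀ x, x ∈ c'.1 ↔ x = e ∨ x ∈ c.1

/-- `c'` is obtained from the configuration `c` by adding a single event. -/
abbrev Covers (c c' : ES.Config) : Prop := ∃ e, ES.Extends c c' e

/-- The (undirected) graph `G(E)` of the domain of an event structure:
vertices are configurations, edges join configurations differing in one event. -/
def configGraph : SimpleGraph ES.Config where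
  Adj c c' := ES.Covers c c' ∨ ES.Covers c' c
  symm := ⟨fun c c' h => Or.symm h⟩
  loopless := by
    constructor
    intro c h
    have key : ¬ ES.Covers c c := by
      rintro ⟨e, he, hmem⟩
      exact he ((hmem e).mpr (Or.inl rfl))
    exact h.elim key key

/-- The empty configuration, i.e. the basepoint `v₀` of the domain. -/
def emptyConfig : ES.Config :=
  ⟨∅, fun e he => absurd he (Finset.notMem_empty e),
      fun e he => absurd he (Finset.notMem_empty e)⟩

/-- Minimal conflict `e #_μ e'`. -/
abbrev MinConflict (e e' : E) : Prop :=
  ES.conflict e e' ∧ ¬ ∃ e'', e'' ≠ e ∧ e'' ≠ e' ∧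
    ((ES.le e'' e ∧ ES.conflict e'' e') ∨ (ES.le e'' e' ∧ ES.conflict e'' e))

/-- `e` is an immediate predecessor of `e'`. -/
abbrev ImmPred (e e' : E) : Prop :=
  ES.le e e' ∧ e ≠ e' ∧ ∀ e'', ES.le e e'' → ES.le e'' e' → e'' = e ∨ e'' = e'

/-- Two events are concurrent: order-incomparable and not in conflict. -/
abbrev Concurrent (e e' : E) : Prop :=
  ¬ ES.le e e' ∧ ¬ ES.le e' e ∧ ¬ ES.conflict e e'

/-- An event `e` is enabled at a configuration `c`. -/
abbrev Enabled (c : ES.Config) (e : E) : Prop := ∃ c' : ES.Config, ES.Extends c c' e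

end EventStructure

/-- The metric interval `I(u,v)` between two vertices of a graph. -/
abbrev mInterval {V : Type*} (G : SimpleGraph V) (u v : V) : Set V :=
  {x | G.dist u x + G.dist x v = G.dist u v}

open Classical in
/-- The label of the edge between two configurations (label of the unique event
in their symmetric difference). -/
noncomputable def stepLabel {E A : Type*} [Nonempty A] (lab : E → A)
    (c c' : Finset E) : A :=
  if h : ∃ e, (e ∈ c' ∧ e ∉ c) ∨ (e ∈ c ∧ e ∉ c') then lab h.choose
  else Classical.arbitrary A

/-- The word `σ(π)` of labels read along a walk of the domain graph. -/
noncomputable def walkWord {E A : Type*} [Nonempty A] {ES : EventStructure E}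
    (lab : E → A) {c c' : ES.Config} (p : ES.configGraph.Walk c c') : List A :=
  p.darts.map fun d => stepLabel lab d.toProd.1.1 d.toProd.2.1

/-- One elementary commutation step on words: exchange two adjacent independent
letters. -/
inductive SwapStep {A : Type*} (I : A → A → Prop) : List A → List A → Prop
  | swap (u v : List A) (a b : A) (h : I a b) :
      SwapStep I (u ++ a :: b :: v) (u ++ b :: a :: v)

/-- Mazurkiewicz trace equivalence `~_I`: the reflexive-transitive closure of
elementary commutations. -/
abbrev TraceEquiv {A : Type*} (I : A → A → Prop) : List A → List A → Prop :=
  Relation.ReflTransGen (SwapStep I)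

/-- `(ES, lab)` is an `M`-labeled event structure over the trace alphabet
`M = (A, I)` (axioms (LES1)-(LES3)). -/
structure IsTraceLabeling {E A : Type*} (ES : EventStructure E)
    (I : A → A → Prop) (lab : E → A) : Prop where
  les1 : ∀ e e', ES.MinConflict e e' → lab e ≠ lab e'
  les2 : ∀ e e', ES.ImmPred e e' ∨ ES.MinConflict e e' → ¬ I (lab e) (lab e')
  les3 : ∀ e e', ¬ I (lab e) (lab e') → ES.le e e' ∨ ES.le e' e ∨ ES.conflict e e'

section Stmt5Aux

open EventStructure

open scoped Classical

variable {E A : Type*} [Nonempty A] {ES : EventStructure E}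

lemma configGraph_adj {c c' : ES.Config} :
    ES.configGraph.Adj c c' ↔ ES.Covers c c' ∨ ES.Covers c' c := Iff.rfl

lemma extends_eq {c c' : ES.Config} {e : E} (h : ES.Extends c c' e) :
    c'.1 = insert e c.1 := by
  ext x
  rw [Finset.mem_insert]
  exact h.2 x

lemma extends_card {c c' : ES.Config} {e : E} (h : ES.Extends c c' e) :
    c'.1.card = c.1.card + 1 := by
  rw [extends_eq h, Finset.card_insert_of_notMem h.1]

lemma stepLabel_extends (lab : E → A) {c c' : ES.Config} {e : E}
    (h : ES.Extends c c' e) : stepLabel lab c.1 c'.1 = lab e := by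
  have hex : ∃ x, (x ∈ c'.1 ∧ x ∉ c.1) ∨ (x ∈ c.1 ∧ x ∉ c'.1) :=
    ⟨e, Or.inl ⟨(h.2 e).mpr (Or.inl rfl), h.1⟩⟩
  rw [stepLabel, dif_pos hex]
  refine congrArg lab ?_
  rcases hex.choose_spec with ⟨hm, hn⟩ | ⟨hm, hn⟩
  · rcases (h.2 _).mp hm with h' | h'
    · exact h'
    · exact absurd h' hn
  · exact absurd ((h.2 _).mpr (Or.inr hm)) hn

lemma card_le_of_walk {c v : ES.Config} (p : ES.configGraph.Walk c v) :
    v.1.card ≤ c.1.card + p.length := by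
  induction p with
  | nil => simp
  | @cons a b c h q ih =>
    rcases (id h : ES.Covers a b ∨ ES.Covers b a) with ⟨e, he⟩ | ⟨e, he⟩
    · have hc := extends_card he
      simp only [SimpleGraph.Walk.length_cons]
      omega
    · have hc := extends_card he
      simp only [SimpleGraph.Walk.length_cons]
      omega

lemma walk_exact (lab : E → A) {c v : ES.Config} (p : ES.configGraph.Walk c v)
    (hlen : v.1.card = c.1.card + p.length) :
    ∃ L : List E, walkWord lab p = L.map lab ∧
      (∀ x, x ∈ L ↔ x ∈ v.1 ∧ x ∉ c.1) ∧
      L.Pairwise (fun x y => ¬ ES.le y x) ∧ c.1 ⊆ v.1 := by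
  induction p with
  | nil =>
    refine ⟨[], by simp [walkWord], fun x => ?_, List.Pairwise.nil, le_refl _⟩
    simp only [List.not_mem_nil, false_iff]
    rintro ⟨hx, hx'⟩
    exact hx' hx
  | @cons a b c h q ih =>
    rcases (id h : ES.Covers a b ∨ ES.Covers b a) with ⟨e, he⟩ | ⟨e, he⟩
    · -- up-step: b = insert e a
      have hcb := extends_card he
      have hlen' : c.1.card = b.1.card + q.length := by
        simp only [SimpleGraph.Walk.length_cons] at hlen; omega
      obtain ⟨L, hL1, hL2, hL3, hL4⟩ := ih hlen'
      have heb : e ∈ b.1 := (he.2 e).mpr (Or.inl rfl)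
      refine ⟨e :: L, ?_, ?_, ?_, ?_⟩
      · simp only [walkWord, SimpleGraph.Walk.darts_cons, List.map_cons]
        rw [← hL1]
        congr 1
        exact stepLabel_extends lab he
      · intro x
        simp only [List.mem_cons, hL2]
        constructor
        · rintro (rfl | ⟨hx1, hx2⟩)
          · exact ⟨hL4 heb, he.1⟩
          · refine ⟨hx1, fun hxa => hx2 ((he.2 x).mpr (Or.inr hxa))⟩
        · rintro ⟨hx1, hx2⟩
          by_cases hxe : x = e
          · exact Or.inl hxe
          · refine Or.inr ⟨hx1, fun hxb => ?_⟩
            rcases (he.2 x).mp hxb with h' | h'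
            · exact hxe h'
            · exact hx2 h'
      · refine List.pairwise_cons.mpr ⟨fun y hy hle => ?_, hL3⟩
        have : y ∈ b.1 := b.2.1 e heb y hle
        exact ((hL2 y).mp hy).2 this
      · intro x hx
        exact hL4 ((he.2 x).mpr (Or.inr hx))
    · -- down-step: impossible
      exfalso
      have hcb := extends_card he
      have hq := card_le_of_walk q
      simp only [SimpleGraph.Walk.length_cons] at hlen
      omega

lemma exists_maximal {s : Finset E} (ES : EventStructure E) {x : E} (hx : x ∈ s) :
    ∃ m ∈ s, ES.le x m ∧ ∀ z ∈ s, ES.le m z → z = m := by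
  classical
  set t := s.filter (fun y => ES.le x y) with ht
  have hxt : x ∈ t := by simp [ht, hx, ES.le_refl]
  obtain ⟨m, hm, hmax⟩ := t.exists_max_image
    (fun y => (t.filter (fun z => ES.le z y)).card) ⟨x, hxt⟩
  have hmt : m ∈ t := hm
  have hms : m ∈ s := (Finset.mem_filter.mp hmt).1
  have hxm : ES.le x m := (Finset.mem_filter.mp hmt).2
  refine ⟨m, hms, hxm, fun z hz hlez => ?_⟩
  by_contra hne
  have hzt : z ∈ t := Finset.mem_filter.mpr ⟨hz, ES.le_trans _ _ _ hxm hlez⟩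
  have hsub : t.filter (fun w => ES.le w m) ⊂ t.filter (fun w => ES.le w z) := by
    constructor
    · intro w hw
      rw [Finset.mem_filter] at hw ⊢
      exact ⟨hw.1, ES.le_trans _ _ _ hw.2 hlez⟩
    · intro hcon
      have hzmem : z ∈ t.filter (fun w => ES.le w z) :=
        Finset.mem_filter.mpr ⟨hzt, ES.le_refl z⟩
      have := Finset.mem_filter.mp (hcon hzmem)
      exact hne (ES.le_antisymm _ _ this.2 hlez)
  have h1 := Finset.card_lt_card hsub
  have h2 := hmax z hzt
  omega

lemma erase_isConfig {v : ES.Config} {e : E} (he : e ∈ v.1)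
    (hmax : ∀ x ∈ v.1, ES.le e x → x = e) : ES.IsConfig (v.1.erase e) := by
  constructor
  · intro a ha a' hle
    rw [Finset.mem_erase] at ha ⊢
    refine ⟨fun hae => ?_, v.2.1 a ha.2 a' hle⟩
    subst hae
    exact ha.1 (hmax a ha.2 hle)
  · intro a ha a' ha'
    exact v.2.2 a (Finset.mem_erase.mp ha).2 a' (Finset.mem_erase.mp ha').2

lemma covers_of_maximal {v : ES.Config} {e : E} (he : e ∈ v.1)
    (hmax : ∀ x ∈ v.1, ES.le e x → x = e) :
    ES.Extends ⟨v.1.erase e, erase_isConfig he hmax⟩ v e := by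
  refine ⟨Finset.notMem_erase e v.1, fun x => ?_⟩
  simp only [Finset.mem_erase]
  constructor
  · intro hx
    by_cases hxe : x = e
    · exact Or.inl hxe
    · exact Or.inr ⟨hxe, hx⟩
  · rintro (rfl | ⟨-, hx⟩)
    · exact he
    · exact hx

lemma maximal_of_covers {u v : ES.Config} {e : E} (h : ES.Extends u v e) :
    e ∈ v.1 ∧ (∀ x ∈ v.1, ES.le e x → x = e) ∧ u.1 = v.1.erase e := by
  have hev : e ∈ v.1 := (h.2 e).mpr (Or.inl rfl)
  have hmax : ∀ x ∈ v.1, ES.le e x → x = e := by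
    intro x hx hle
    by_contra hne
    have hxu : x ∈ u.1 := by
      rcases (h.2 x).mp hx with h' | h'
      · exact absurd h' hne
      · exact h'
    exact h.1 (u.2.1 x hxu e hle)
  refine ⟨hev, hmax, ?_⟩
  ext x
  rw [Finset.mem_erase]
  constructor
  · intro hx
    exact ⟨fun hxe => h.1 (hxe ▸ hx), (h.2 x).mpr (Or.inr hx)⟩
  · rintro ⟨hxe, hx⟩
    rcases (h.2 x).mp hx with h' | h'
    · exact absurd h' hxe
    · exact h'

lemma exists_walk_card (v : ES.Config) :
    ∃ p : ES.configGraph.Walk ES.emptyConfig v, p.length = v.1.card := by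
  obtain ⟨n, hn⟩ : ∃ n, v.1.card = n := ⟨v.1.card, rfl⟩
  induction n generalizing v with
  | zero =>
    have hv : v = ES.emptyConfig := by
      apply Subtype.ext
      simpa [EventStructure.emptyConfig] using Finset.card_eq_zero.mp hn
    subst hv
    exact ⟨SimpleGraph.Walk.nil, by simp [hn]⟩
  | succ n ih =>
    have hne : v.1.Nonempty := Finset.card_pos.mp (by omega)
    obtain ⟨x, hx⟩ := hne
    obtain ⟨m, hm, -, hmax⟩ := exists_maximal ES hx
    set u : ES.Config := ⟨v.1.erase m, erase_isConfig hm hmax⟩ with hu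
    have hcov : ES.Extends u v m := covers_of_maximal hm hmax
    have hcard : u.1.card = n := by
      simp only [hu, Finset.card_erase_of_mem hm, hn]
      omega
    obtain ⟨q, hq⟩ := ih u hcard
    have hadj : ES.configGraph.Adj u v := Or.inl ⟨m, hcov⟩
    exact ⟨q.concat hadj, by simp [SimpleGraph.Walk.length_concat, hq, hcard, hn]⟩

lemma dist_eq_card (v : ES.Config) :
    ES.configGraph.dist ES.emptyConfig v = v.1.card := by
  obtain ⟨p, hp⟩ := exists_walk_card v
  have h1 : ES.configGraph.dist ES.emptyConfig v ≤ v.1.card :=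
    hp ▸ SimpleGraph.dist_le p
  have hr : ES.configGraph.Reachable ES.emptyConfig v := ⟨p⟩
  obtain ⟨q, hq⟩ := hr.exists_walk_length_eq_dist
  have h2 := card_le_of_walk q
  have h3 : (ES.emptyConfig : ES.Config).1.card = 0 := by
    simp [EventStructure.emptyConfig]
  omega

lemma neigh_iff (v : ES.Config) :
    (∃! u : ES.Config, ES.configGraph.Adj v u ∧
        u ∈ mInterval ES.configGraph ES.emptyConfig v) ↔
      (∃! e, e ∈ v.1 ∧ ∀ x ∈ v.1, ES.le e x → x = e) := by
  have key : ∀ u : ES.Config,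
      (ES.configGraph.Adj v u ∧ u ∈ mInterval ES.configGraph ES.emptyConfig v) ↔
        ES.Covers u v := by
    intro u
    constructor
    · rintro ⟨hadj, hint⟩
      rcases hadj with ⟨e, he⟩ | hcov
      · exfalso
        have hcard := extends_card he
        have hd1 : ES.configGraph.dist ES.emptyConfig u = u.1.card := dist_eq_card u
        have hdv : ES.configGraph.dist ES.emptyConfig v = v.1.card := dist_eq_card v
        have hadj' : ES.configGraph.Adj u v := Or.inr ⟨e, he⟩
        have hd2 : ES.configGraph.dist u v = 1 :=
          SimpleGraph.dist_eq_one_iff_adj.mpr hadj'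
        simp only [mInterval, Set.mem_setOf_eq] at hint
        omega
      · exact hcov
    · rintro ⟨e, he⟩
      have hcard := extends_card he
      have hadj' : ES.configGraph.Adj u v := Or.inl ⟨e, he⟩
      refine ⟨hadj'.symm, ?_⟩
      simp only [mInterval, Set.mem_setOf_eq]
      have hd1 : ES.configGraph.dist ES.emptyConfig u = u.1.card := dist_eq_card u
      have hdv : ES.configGraph.dist ES.emptyConfig v = v.1.card := dist_eq_card v
      have hd2 : ES.configGraph.dist u v = 1 :=
        SimpleGraph.dist_eq_one_iff_adj.mpr hadj'
      omega
  constructor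
  · rintro ⟨u, hu, huniq⟩
    obtain ⟨e, he⟩ := (key u).mp hu
    obtain ⟨hev, hemax, hue⟩ := maximal_of_covers he
    refine ⟨e, ⟨hev, hemax⟩, fun f ⟨hfv, hfmax⟩ => ?_⟩
    set uf : ES.Config := ⟨v.1.erase f, erase_isConfig hfv hfmax⟩ with huf
    have hcovf : ES.Covers uf v := ⟨f, covers_of_maximal hfv hfmax⟩
    have : uf = u := huniq uf ((key uf).mpr hcovf)
    have heq : v.1.erase f = v.1.erase e := by
      rw [← hue, ← this]
    by_contra hne
    have : f ∈ v.1.erase e := Finset.mem_erase.mpr ⟨hne, hfv⟩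
    rw [← heq] at this
    exact (Finset.notMem_erase f v.1) this
  · rintro ⟨e, ⟨hev, hemax⟩, huniq⟩
    refine ⟨⟨v.1.erase e, erase_isConfig hev hemax⟩,
      (key _).mpr ⟨e, covers_of_maximal hev hemax⟩, fun u hu => ?_⟩
    obtain ⟨f, hf⟩ := (key u).mp hu
    obtain ⟨hfv, hfmax, huf⟩ := maximal_of_covers hf
    have : f = e := huniq f ⟨hfv, hfmax⟩
    apply Subtype.ext
    rw [huf, this]

end Stmt5Aux

section Stmt5Aux2

open EventStructure

variable {E A : Type*} [Nonempty A] {ES : EventStructure E}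

lemma swapStep_cons {B : Type*} {J : B → B → Prop} {w w' : List B} (a : B)
    (h : SwapStep J w w') : SwapStep J (a :: w) (a :: w') := by
  rcases h with ⟨u, t, x, y, hxy⟩
  exact SwapStep.swap (a :: u) t x y hxy

lemma traceEquiv_cons {B : Type*} {J : B → B → Prop} {w w' : List B} (a : B)
    (h : TraceEquiv J w w') : TraceEquiv J (a :: w) (a :: w') := by
  induction h with
  | refl => exact Relation.ReflTransGen.refl
  | tail _ step ih => exact ih.tail (swapStep_cons a step)

lemma traceEquiv_map {J : E → E → Prop} {I : A → A → Prop} (lab : E → A)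
    (hJ : ∀ x y, J x y → I (lab x) (lab y)) {L L' : List E}
    (h : TraceEquiv J L L') : TraceEquiv I (L.map lab) (L'.map lab) := by
  induction h with
  | refl => exact Relation.ReflTransGen.refl
  | tail _ step ih =>
    refine ih.tail ?_
    rcases step with ⟨u, t, x, y, hxy⟩
    have := SwapStep.swap (u.map lab) (t.map lab) (lab x) (lab y) (hJ x y hxy)
    simpa using this

lemma move_to_end {J : E → E → Prop} :
    ∀ (L : List E) (f : E), (∀ y ∈ L, J f y) → TraceEquiv J (f :: L) (L ++ [f])
  | [], f, _ => Relation.ReflTransGen.refl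
  | z :: L', f, h => by
    have step : SwapStep J (f :: z :: L') (z :: f :: L') :=
      SwapStep.swap [] L' f z (h z List.mem_cons_self)
    refine Relation.ReflTransGen.head step ?_
    exact traceEquiv_cons z (move_to_end L' f (fun y hy => h y (List.mem_cons_of_mem z hy)))

lemma bubble {J : E → E → Prop} :
    ∀ (L : List E) (f : E), f ∈ L → L.Pairwise (fun x y => x = f → J f y) →
      ∃ K : List E, TraceEquiv J L (K ++ [f])
  | [], f, hf, _ => absurd hf List.not_mem_nil
  | z :: L', f, hf, hp => by
    by_cases hz : z = f
    · subst hz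
      refine ⟨L', move_to_end L' z ?_⟩
      intro y hy
      exact (List.pairwise_cons.mp hp).1 y hy rfl
    · have hf' : f ∈ L' := by
        rcases List.mem_cons.mp hf with h | h
        · exact absurd h.symm hz
        · exact h
      obtain ⟨K', hK'⟩ := bubble L' f hf' (List.pairwise_cons.mp hp).2
      exact ⟨z :: K', traceEquiv_cons z hK'⟩

/-- The invariant preserved by a single commutation step. -/
lemma preserve {I : A → A → Prop} (hI_irrefl : ∀ a, ¬ I a a) (lab : E → A)
    (hlab : IsTraceLabeling ES I lab) {v : ES.Config} {emax : E}
    (hall : ∀ x ∈ v.1, ES.le x emax) {w w' : List A} (step : SwapStep I w w')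
    (H : ∃ L : List E, (∀ x, x ∈ L ↔ x ∈ v.1) ∧
        L.Pairwise (fun x y => ¬ ES.le y x) ∧ w = L.map lab ∧
        L.getLast? = some emax) :
    ∃ L : List E, (∀ x, x ∈ L ↔ x ∈ v.1) ∧
        L.Pairwise (fun x y => ¬ ES.le y x) ∧ w' = L.map lab ∧
        L.getLast? = some emax := by
  obtain ⟨L, hmem, hpair, hw, hlast⟩ := H
  rcases step with ⟨u, t, a, b, hab⟩
  -- decompose L along the position of the swap
  set n := u.length with hn
  have hsplit : L = L.take n ++ L.drop n := (List.take_append_drop n L).symm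
  have htake : (L.take n).map lab = u := by
    rw [List.map_take, ← hw, hn, List.take_left]
  have hdropmap : (L.drop n).map lab = a :: b :: t := by
    rw [List.map_drop, ← hw, hn, List.drop_left]
  rcases hdrop : L.drop n with _ | ⟨x, rest⟩
  · rw [hdrop] at hdropmap; simp at hdropmap
  rcases hrest : rest with _ | ⟨y, Lt⟩
  · rw [hdrop, hrest] at hdropmap; simp at hdropmap
  rw [hdrop, hrest] at hdropmap
  simp only [List.map_cons, List.cons.injEq] at hdropmap
  obtain ⟨hxa, hyb, htmap⟩ := hdropmap
  set Lu := L.take n with hLu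
  have hLeq : L = Lu ++ x :: y :: Lt := by
    rw [hsplit, hdrop, hrest]
  have hpair' : (Lu ++ x :: y :: Lt).Pairwise (fun x y => ¬ ES.le y x) :=
    hLeq ▸ hpair
  rw [List.pairwise_append] at hpair'
  obtain ⟨hpu, hpxy, hpmix⟩ := hpair'
  rw [List.pairwise_cons] at hpxy
  obtain ⟨hx_rest, hpy⟩ := hpxy
  rw [List.pairwise_cons] at hpy
  obtain ⟨hy_rest, hpLt⟩ := hpy
  have hyx : ¬ ES.le y x := hx_rest y List.mem_cons_self
  have hxv : x ∈ v.1 := (hmem x).mp (hLeq ▸ (by simp))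
  have hyv : y ∈ v.1 := (hmem y).mp (hLeq ▸ (by simp))
  have hxyne : x ≠ y := by
    intro hxy
    rw [hxy, hyb] at hxa
    exact hI_irrefl b (hxa ▸ hab)
  have hxy : ¬ ES.le x y := by
    intro hle
    have himm : ES.ImmPred x y := by
      refine ⟨hle, hxyne, fun z hz1 hz2 => ?_⟩
      have hzv : z ∈ v.1 := v.2.1 y hyv z hz2
      have hzL : z ∈ Lu ++ x :: y :: Lt := hLeq ▸ (hmem z).mpr hzv
      rcases List.mem_append.mp hzL with hzu | hzc
      · exact absurd hz1 (hpmix z hzu x (by simp))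
      · rcases List.mem_cons.mp hzc with h | h
        · exact Or.inl h
        · rcases List.mem_cons.mp h with h | h
          · exact Or.inr h
          · exact absurd hz2 (hy_rest z h)
    have := hlab.les2 x y (Or.inl himm)
    rw [hxa, hyb] at this
    exact this hab
  have hLtne : Lt ≠ [] := by
    intro hLt
    subst hLt
    have hy_emax : y = emax := by
      have : L.getLast? = some y := by
        rw [hLeq]
        have : Lu ++ x :: y :: ([] : List E) = (Lu ++ [x]) ++ [y] := by simp
        rw [this, List.getLast?_concat]
      rw [this] at hlast
      exact Option.some_injective _ hlast
    exact hxy (hy_emax ▸ hall x hxv)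
  refine ⟨Lu ++ y :: x :: Lt, ?_, ?_, ?_, ?_⟩
  · intro z
    rw [← hmem z, hLeq]
    simp only [List.mem_append, List.mem_cons]
    tauto
  · rw [List.pairwise_append]
    refine ⟨hpu, ?_, ?_⟩
    · rw [List.pairwise_cons]
      refine ⟨?_, ?_⟩
      · intro z hz
        rcases List.mem_cons.mp hz with h | h
        · exact h ▸ hxy
        · exact hy_rest z h
      · rw [List.pairwise_cons]
        exact ⟨fun z hz => hx_rest z (List.mem_cons_of_mem y hz), hpLt⟩
    · intro p hp q hq
      refine hpmix p hp q ?_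
      simp only [List.mem_cons] at hq ⊢
      tauto
  · rw [List.map_append, List.map_cons, List.map_cons, htake, hxa, hyb, htmap]
  · have h1 : (Lu ++ y :: x :: Lt).getLast? = Lt.getLast? := by
      have : Lu ++ y :: x :: Lt = (Lu ++ [y, x]) ++ Lt := by simp
      rw [this, List.getLast?_append_of_ne_nil _ hLtne]
    have h2 : L.getLast? = Lt.getLast? := by
      rw [hLeq]
      have : Lu ++ x :: y :: Lt = (Lu ++ [x, y]) ++ Lt := by simp
      rw [this, List.getLast?_append_of_ne_nil _ hLtne]
    rw [h1, ← h2, hlast]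

end Stmt5Aux2

/-- The geodesic trace `⟨σ_v⟩` is prime iff the interval
`I(v₀,v)` is prime, i.e. `v` has exactly one neighbor in the subgraph of
`G(E)` induced by `I(v₀,v)`. -/
theorem stmt5 {E A : Type*} [Fintype A] [Nonempty A]
    (ES : EventStructure E) (I : A → A → Prop)
    (hI_irrefl : ∀ a, ¬ I a a) (hI_symm : ∀ a b, I a b → I b a)
    (lab : E → A) (hlab : IsTraceLabeling ES I lab)
    (v : ES.Config)
    (p : ES.configGraph.Walk ES.emptyConfig v)
    (hp : p.length = ES.configGraph.dist ES.emptyConfig v) :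
    (walkWord lab p ≠ [] ∧
        ∀ w : List A, TraceEquiv I (walkWord lab p) w →
          w.getLast? = (walkWord lab p).getLast?) ↔
      (∃! u : ES.Config, ES.configGraph.Adj v u ∧
        u ∈ mInterval ES.configGraph ES.emptyConfig v) := by
  classical
  have hd := dist_eq_card (ES := ES) v
  have hc0 : (ES.emptyConfig : ES.Config).1.card = 0 := by
    simp [EventStructure.emptyConfig]
  have hlen : v.1.card = (ES.emptyConfig : ES.Config).1.card + p.length := by
    rw [hc0, hp, hd]
    omega
  obtain ⟨L0, hw0, hmem0', hpair0, -⟩ := walk_exact lab p hlen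
  have hmem0 : ∀ x, x ∈ L0 ↔ x ∈ v.1 := by
    intro x
    rw [hmem0' x]
    simp [EventStructure.emptyConfig]
  rw [neigh_iff]
  constructor
  · rintro ⟨hne, hlast⟩
    have hLne : L0 ≠ [] := by
      intro h
      apply hne
      rw [hw0, h]
      rfl
    obtain ⟨x0, hx0⟩ := List.exists_mem_of_ne_nil L0 hLne
    have hx0v : x0 ∈ v.1 := (hmem0 x0).mp hx0
    obtain ⟨m, hm, -, hmmax⟩ := exists_maximal ES hx0v
    have key : ∀ g ∈ v.1, (∀ x ∈ v.1, ES.le g x → x = g) →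
        some (lab g) = (walkWord lab p).getLast? := by
      intro g hgv hgmax
      have hgL : g ∈ L0 := (hmem0 g).mpr hgv
      have hpairJ : L0.Pairwise (fun x y => x = g → I (lab g) (lab y)) := by
        refine List.Pairwise.imp_of_mem ?_ hpair0
        intro a b ha hb hR hag
        subst hag
        have hbv : b ∈ v.1 := (hmem0 b).mp hb
        by_contra hnI
        rcases hlab.les3 a b hnI with h | h | h
        · have hba : b = a := hgmax b hbv h
          exact hR (hba ▸ h)
        · exact hR h
        · exact v.2.2 a ((hmem0 a).mp ha) b hbv h
      obtain ⟨K, hK⟩ := bubble (J := fun x y => I (lab x) (lab y)) L0 g hgL hpairJ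
      have hKw : TraceEquiv I (walkWord lab p) ((K ++ [g]).map lab) := by
        rw [hw0]
        exact traceEquiv_map lab (fun x y h => h) hK
      have hl := hlast _ hKw
      have hKl : ((K ++ [g]).map lab).getLast? = some (lab g) := by
        rw [List.map_append]
        simp
      rw [← hl, hKl]
    refine ⟨m, ⟨hm, hmmax⟩, ?_⟩
    rintro f ⟨hfv, hfmax⟩
    have h1 := key m hm hmmax
    have h2 := key f hfv hfmax
    have hfm : lab f = lab m := Option.some_injective _ (h2.trans h1.symm)
    by_contra hne'
    have hnI : ¬ I (lab f) (lab m) := by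
      rw [hfm]
      exact hI_irrefl (lab m)
    rcases hlab.les3 f m hnI with h | h | h
    · exact hne' ((hfmax m hm h).symm)
    · exact hne' (hmmax f hfv h)
    · exact v.2.2 f hfv m hm h
  · rintro ⟨e, ⟨hev, hemax⟩, huniq⟩
    have hall : ∀ x ∈ v.1, ES.le x e := by
      intro x hx
      obtain ⟨m, hm, hxm, hmmax⟩ := exists_maximal ES hx
      have hme : m = e := huniq m ⟨hm, hmmax⟩
      exact hme ▸ hxm
    have heL : e ∈ L0 := (hmem0 e).mpr hev
    have hLne : L0 ≠ [] := by
      intro h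
      rw [h] at heL
      exact List.not_mem_nil heL
    have hlast0 : L0.getLast? = some e := by
      set z := L0.getLast hLne with hzdef
      have hzL : z ∈ L0 := List.getLast_mem hLne
      have hzv : z ∈ v.1 := (hmem0 z).mp hzL
      have hsplit : L0.dropLast ++ [z] = L0 := List.dropLast_append_getLast hLne
      have hzmax : ∀ x ∈ v.1, ES.le z x → x = z := by
        intro x hx hle
        by_contra hne'
        have hxL : x ∈ L0 := (hmem0 x).mpr hx
        have hpd : (L0.dropLast ++ [z]).Pairwise (fun a b => ¬ ES.le b a) := by
          rw [hsplit]
          exact hpair0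
        rw [List.pairwise_append] at hpd
        have hxdl : x ∈ L0.dropLast := by
          rw [← hsplit] at hxL
          rcases List.mem_append.mp hxL with h | h
          · exact h
          · simp only [List.mem_singleton] at h
            exact absurd h hne'
        exact hpd.2.2 x hxdl z (by simp) hle
      have hze : z = e := huniq z ⟨hzv, hzmax⟩
      rw [← hsplit, List.getLast?_concat, hze]
    have hQ : ∀ w, TraceEquiv I (walkWord lab p) w →
        ∃ L : List E, (∀ x, x ∈ L ↔ x ∈ v.1) ∧
          L.Pairwise (fun x y => ¬ ES.le y x) ∧ w = L.map lab ∧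
          L.getLast? = some e := by
      intro w hw
      induction hw with
      | refl => exact ⟨L0, hmem0, hpair0, hw0, hlast0⟩
      | tail _ step ih => exact preserve hI_irrefl lab hlab hall step ih
    constructor
    · rw [hw0]
      intro hcon
      exact hLne (by simpa using hcon)
    · intro w hw
      obtain ⟨L, -, -, hwL, hLl⟩ := hQ w hw
      have hw0l : (walkWord lab p).getLast? = some (lab e) := by
        rw [hw0, List.getLast?_map, hlast0]
        rfl
      rw [hwL, List.getLast?_map, hLl, hw0l]
      rfl
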